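/- For every complex Hadamard matrix H of size Q ≥ 1, the fixed-point set {x ∈ M_Q(ℂ) : Θ_H x = x} of the angle operator is a commutative unital *-subalgebra of M_Q(ℂ): it contains the identity matrix, is closed under addition, scalar multiplication, matrix multiplication and the conjugate transpose, and any two of its elements commute. -/

import Mathlib

open scoped BigOperators Matrix

/-- The angle operator on 2-boxes associated to a complex Hadamard matrix `H`
(of size `Fintype.card n`):
`(Θ_H ξ)_{a,b} = Q⁻³ ∑_{c,d} |∑_m H_{m,c} conj(H_{m,d}) conj(H_{m,a}) H_{m,b}|² ξ_{c,d}`. -/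
noncomputable def angleOp {n : Type*} [Fintype n] (H : Matrix n n ℂ) :
    Matrix n n ℂ →ₗ[ℂ] Matrix n n ℂ where
  toFun ξ := Matrix.of fun a b =>
    (((Fintype.card n : ℂ)) ^ 3)⁻¹ *
      ∑ c, ∑ d,
        ((‖∑ m, H m c * (starRingEnd ℂ) (H m d) *
            (starRingEnd ℂ) (H m a) * H m b‖ ^ 2 : ℝ) : ℂ) * ξ c d
  map_add' ξ η := by
    ext a b
    simp [Matrix.add_apply, mul_add, Finset.sum_add_distrib]
  map_smul' r ξ := by
    ext a b
    simp [Matrix.smul_apply, smul_eq_mul, Finset.mul_sum, mul_comm, mul_assoc, mul_left_comm]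

/-!
Write `v_{cd} = H_{·c} ∘ conj H_{·d}` for the Schur products of columns of `H`. The kernel of
`Θ_H` is `Q⁻³ |⟨v_{ab}, v_{cd}⟩|²`, a symmetric nonnegative matrix with all row sums `1`, so its
fixed points are exactly the `x` that are constant along its support: the Dirichlet energy
`∑ N_{ij} |x_i - x_j|²` of a fixed point vanishes. For each `a` the vectors `Q^{-1/2} v_{ad}` form
an orthonormal basis, and constancy along the kernel says precisely that `x` is the table of
eigenvalues of some `Y` with `Y v_{cd} = x_{cd} v_{cd}`. A Fourier-type duality turns this around:
`x` is such an eigenvalue table for `H` iff `x` itself acts diagonally on the column products of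
`Hᴴ`. The matrices diagonal in one fixed orthogonal basis form a commutative unital *-algebra.
-/

open Finset ComplexConjugate

theorem apply_eq_apply_of_sum_mul_eq {ι : Type*} [Fintype ι] {N : ι → ι → ℝ} {r : ℝ}
    (h_nonneg : ∀ i j, 0 ≤ N i j) (h_symm : ∀ i j, N i j = N j i)
    (h_sum : ∀ i, ∑ j, N i j = r) {x : ι → ℂ}
    (hx : ∀ i, ∑ j, (N i j : ℂ) * x j = r * x i) {i j : ι} (hij : N i j ≠ 0) :
    x i = x j := by
  open Complex in
  have cross (i : ι) : ∑ j, N i j * (x i * conj (x j)).re = r * normSq (x i) := by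
    calc ∑ j, N i j * (x i * conj (x j)).re = (x i * conj (∑ j, (N i j : ℂ) * x j)).re := by
          simp only [map_sum, map_mul, conj_ofReal, mul_sum, re_sum, mul_left_comm (x i),
            re_ofReal_mul]
      _ = r * normSq (x i) := by
          rw [hx, map_mul, conj_ofReal, mul_left_comm, mul_conj, ← ofReal_mul, ofReal_re]
  have h_col : ∑ i, ∑ j, N i j * normSq (x j) = ∑ j, r * normSq (x j) := by
    rw [sum_comm]
    refine sum_congr rfl fun j _ => ?_
    rw [← sum_mul, ← h_sum j]
    simp only [h_symm _ j]
  have energy : ∑ i, ∑ j, N i j * normSq (x i - x j) = 0 := by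
    calc ∑ i, ∑ j, N i j * normSq (x i - x j)
        = ∑ i, ((∑ j, N i j) * normSq (x i) + ∑ j, N i j * normSq (x j)
            - 2 * ∑ j, N i j * (x i * conj (x j)).re) := by
          refine sum_congr rfl fun i _ => ?_
          rw [sum_mul, mul_sum, ← sum_add_distrib, ← sum_sub_distrib]
          refine sum_congr rfl fun j _ => ?_
          rw [normSq_sub]
          ring
      _ = ∑ i, (r * normSq (x i) + ∑ j, N i j * normSq (x j) - 2 * (r * normSq (x i))) := by
          simp only [h_sum, cross]
      _ = 0 := by
          rw [sum_sub_distrib, sum_add_distrib, h_col, ← sum_add_distrib, ← sum_sub_distrib]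
          exact sum_eq_zero fun i _ => by ring
  have hterm := (sum_eq_zero_iff_of_nonneg fun j _ => mul_nonneg (h_nonneg i j)
    (normSq_nonneg _)).1 ((sum_eq_zero_iff_of_nonneg fun i _ =>
      sum_nonneg fun j _ => mul_nonneg (h_nonneg i j) (normSq_nonneg _)).1
        energy i (mem_univ i)) j (mem_univ j)
  exact sub_eq_zero.1 (normSq_eq_zero.1 ((mul_eq_zero.1 hterm).resolve_left hij))

namespace Matrix

variable {n : Type*} [Fintype n] [DecidableEq n]

structure IsComplexHadamard (H : Matrix n n ℂ) : Prop where
  norm_apply : ∀ i j, ‖H i j‖ = 1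
  mul_conjTranspose_self : H * Hᴴ = (Fintype.card n : ℂ) • 1

/-- The columns of `colProd H a` are the vectors `v_{ad}`. -/
def colProd (H : Matrix n n ℂ) (a : n) : Matrix n n ℂ :=
  diagonal (fun m => H m a) * Hᵀᴴ

@[simp]
lemma colProd_apply (H : Matrix n n ℂ) (a m d : n) :
    colProd H a m d = H m a * star (H m d) := by
  simp [colProd, diagonal_mul]

lemma conjTranspose_colProd_mul_apply (H : Matrix n n ℂ) (a b c d : n) :
    ((colProd H a)ᴴ * colProd H c) b d = ∑ m, H m c * star (H m d) * star (H m a) * H m b := by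
  simp only [mul_apply, conjTranspose_apply, colProd_apply, star_mul', star_star]
  exact sum_congr rfl fun m _ => by ring

namespace IsComplexHadamard

variable {H : Matrix n n ℂ} (hH : H.IsComplexHadamard)
include hH

lemma star_mul_self_apply (i j : n) : star (H i j) * H i j = 1 := by
  rw [mul_comm, Complex.star_def, Complex.mul_conj', hH.norm_apply]; norm_num

lemma conjTranspose_mul_self : Hᴴ * H = (Fintype.card n : ℂ) • 1 := by
  rcases isEmpty_or_nonempty n with hn | hn
  · exact Subsingleton.elim _ _
  have hQ : (Fintype.card n : ℂ) ≠ 0 := Nat.cast_ne_zero.2 Fintype.card_ne_zero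
  have h_inv : H * ((Fintype.card n : ℂ)⁻¹ • Hᴴ) = 1 := by
    rw [Matrix.mul_smul, hH.mul_conjTranspose_self, smul_smul, inv_mul_cancel₀ hQ, one_smul]
  calc Hᴴ * H = (Fintype.card n : ℂ) • ((Fintype.card n : ℂ)⁻¹ • Hᴴ * H) := by
        rw [Matrix.smul_mul, smul_smul, mul_inv_cancel₀ hQ, one_smul]
    _ = (Fintype.card n : ℂ) • 1 := by rw [mul_eq_one_comm.mp h_inv]

lemma conjTranspose : Hᴴ.IsComplexHadamard where
  norm_apply i j := by rw [conjTranspose_apply, norm_star, hH.norm_apply]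
  mul_conjTranspose_self := by rw [conjTranspose_conjTranspose, hH.conjTranspose_mul_self]

lemma conjTranspose_diagonal_col_mul (a : n) :
    (diagonal (fun m => H m a))ᴴ * diagonal (fun m => H m a) = 1 := by
  rw [diagonal_conjTranspose, diagonal_mul_diagonal, ← diagonal_one]
  exact congrArg diagonal (funext fun m => hH.star_mul_self_apply m a)

lemma colProd_mul_conjTranspose (a : n) :
    colProd H a * (colProd H a)ᴴ = (Fintype.card n : ℂ) • 1 := by
  have : Hᵀᴴ * Hᵀ = (Fintype.card n : ℂ) • 1 := by
    rw [conjTranspose_transpose_eq_transpose_conjTranspose, ← transpose_mul,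
      hH.mul_conjTranspose_self, transpose_smul, transpose_one]
  rw [colProd, conjTranspose_mul, conjTranspose_conjTranspose, Matrix.mul_assoc,
    ← Matrix.mul_assoc Hᵀᴴ, this, Matrix.smul_mul, Matrix.one_mul, Matrix.mul_smul,
    diagonal_conjTranspose, (commute_diagonal _ _).eq, ← diagonal_conjTranspose,
    hH.conjTranspose_diagonal_col_mul]

lemma conjTranspose_colProd_mul (a : n) :
    (colProd H a)ᴴ * colProd H a = (Fintype.card n : ℂ) • 1 := by
  rw [colProd, conjTranspose_mul, conjTranspose_conjTranspose, Matrix.mul_assoc,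
    ← Matrix.mul_assoc _ (diagonal _), hH.conjTranspose_diagonal_col_mul, Matrix.one_mul,
    conjTranspose_transpose_eq_transpose_conjTranspose, ← transpose_mul,
    hH.conjTranspose_mul_self, transpose_smul, transpose_one]

lemma colProd_mul_conjTranspose_colProd_mul (a : n) (M : Matrix n n ℂ) :
    colProd H a * ((colProd H a)ᴴ * M) = (Fintype.card n : ℂ) • M := by
  rw [← Matrix.mul_assoc, hH.colProd_mul_conjTranspose, Matrix.smul_mul, Matrix.one_mul]

lemma conjTranspose_colProd_mul_colProd_mul (a : n) (M : Matrix n n ℂ) :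
    (colProd H a)ᴴ * (colProd H a * M) = (Fintype.card n : ℂ) • M := by
  rw [← Matrix.mul_assoc, hH.conjTranspose_colProd_mul, Matrix.smul_mul, Matrix.one_mul]

lemma sum_sum_norm_sq_conjTranspose_colProd_mul_apply (a b : n) :
    ∑ c, ∑ d, ‖((colProd H a)ᴴ * colProd H c) b d‖ ^ 2 = (Fintype.card n : ℝ) ^ 3 := by
  have h_row (c : n) : ∑ d, ‖((colProd H a)ᴴ * colProd H c) b d‖ ^ 2 =
      (Fintype.card n : ℝ) ^ 2 := by
    set M := (colProd H a)ᴴ * colProd H c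
    have hM : M * Mᴴ = (Fintype.card n : ℂ) ^ 2 • 1 := by
      rw [conjTranspose_mul, conjTranspose_conjTranspose, Matrix.mul_assoc,
        hH.colProd_mul_conjTranspose_colProd_mul, Matrix.mul_smul, hH.conjTranspose_colProd_mul,
        smul_smul, sq]
    have := congrFun (congrFun hM b) b
    simp only [mul_apply, conjTranspose_apply, Complex.star_def, Complex.mul_conj', smul_apply,
      one_apply_eq, smul_eq_mul, mul_one] at this
    exact_mod_cast this
  simp only [h_row, sum_const, card_univ, nsmul_eq_mul]
  ring

end IsComplexHadamard

/-- `Y v_{cd} = x_{cd} v_{cd}` for all `c, d`. -/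
def ColProdEigen (H Y x : Matrix n n ℂ) : Prop :=
  ∀ c, Y * colProd H c = colProd H c * diagonal (x c)

lemma colProdEigen_one (H : Matrix n n ℂ) : ColProdEigen H 1 (of fun _ _ => 1) := fun _ =>
  (Matrix.one_mul _).trans (Matrix.mul_one _).symm

namespace ColProdEigen

variable {H Y Z x z : Matrix n n ℂ}

lemma smul (h : ColProdEigen H Y x) (k : ℂ) : ColProdEigen H (k • Y) (k • x) := fun c => by
  change _ = _ * diagonal (k • x c)
  rw [Matrix.smul_mul, h c, diagonal_smul, Matrix.mul_smul]

lemma mul (hY : ColProdEigen H Y x) (hZ : ColProdEigen H Z z) :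
    ColProdEigen H (Y * Z) (x ⊙ z) := fun c => by
  rw [Matrix.mul_assoc, hZ c, ← Matrix.mul_assoc, hY c, Matrix.mul_assoc, diagonal_mul_diagonal]
  rfl

lemma card_smul_eq (hH : H.IsComplexHadamard) (h : ColProdEigen H Y x) (c : n) :
    (Fintype.card n : ℂ) • Y = colProd H c * diagonal (x c) * (colProd H c)ᴴ := by
  rw [← h c, Matrix.mul_assoc, hH.colProd_mul_conjTranspose, Matrix.mul_smul, Matrix.mul_one]

lemma unique [Nonempty n] (hH : H.IsComplexHadamard) (hY : ColProdEigen H Y x)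
    (hZ : ColProdEigen H Z x) : Y = Z := by
  let c := Classical.arbitrary n
  exact smul_right_injective _ (Nat.cast_ne_zero.2 Fintype.card_ne_zero)
    ((hY.card_smul_eq hH c).trans (hZ.card_smul_eq hH c).symm)

lemma conjTranspose (hH : H.IsComplexHadamard) (h : ColProdEigen H Y x) :
    ColProdEigen H Yᴴ (x.map star) := fun c => by
  have : Nonempty n := ⟨c⟩
  have hQ : (Fintype.card n : ℂ) ≠ 0 := Nat.cast_ne_zero.2 Fintype.card_ne_zero
  refine smul_right_injective _ hQ ?_
  calc (Fintype.card n : ℂ) • (Yᴴ * colProd H c)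
      = ((Fintype.card n : ℂ) • Y)ᴴ * colProd H c := by
        rw [conjTranspose_smul, star_natCast, Matrix.smul_mul]
    _ = (Fintype.card n : ℂ) • (colProd H c * diagonal ((x.map star) c)) := by
        simp only [h.card_smul_eq hH c, conjTranspose_mul, conjTranspose_conjTranspose,
          Matrix.mul_assoc, hH.conjTranspose_colProd_mul, Matrix.mul_smul, Matrix.mul_one,
          diagonal_conjTranspose]
        rfl

lemma dual (hH : H.IsComplexHadamard) (h : ColProdEigen H Y x) :
    ColProdEigen Hᴴ x ((Fintype.card n : ℂ) • Y) := fun m => by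
  ext c k
  have hY := congrFun (congrFun (h.card_smul_eq hH c) m) k
  rw [mul_apply, smul_apply, smul_eq_mul] at hY
  rw [mul_diagonal, mul_apply, smul_apply, smul_eq_mul, hY, mul_sum]
  simp only [mul_diagonal, conjTranspose_apply, colProd_apply, star_mul', star_star]
  refine sum_congr rfl fun e _ => ?_
  -- the two sides differ by the factor `|H m c|² |H k c|² = 1`
  linear_combination (-(x c e * (star (H m e) * H k e)) * (star (H k c) * H k c)) *
    hH.star_mul_self_apply m c - x c e * (star (H m e) * H k e) * hH.star_mul_self_apply k c

end ColProdEigen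

theorem exists_colProdEigen_iff [Nonempty n] {H x : Matrix n n ℂ} (hH : H.IsComplexHadamard) :
    (∃ Y, ColProdEigen H Y x) ↔ ∀ a c, diagonal (x a) * ((colProd H a)ᴴ * colProd H c) =
      (colProd H a)ᴴ * colProd H c * diagonal (x c) := by
  have hQ : (Fintype.card n : ℂ) ≠ 0 := Nat.cast_ne_zero.2 Fintype.card_ne_zero
  constructor
  · rintro ⟨Y, h⟩ a c
    refine smul_right_injective _ hQ ?_
    calc (Fintype.card n : ℂ) • (diagonal (x a) * ((colProd H a)ᴴ * colProd H c))
        = (colProd H a)ᴴ * ((Fintype.card n : ℂ) • Y * colProd H c) := by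
          simp only [h.card_smul_eq hH a, Matrix.mul_assoc,
            hH.conjTranspose_colProd_mul_colProd_mul]
      _ = (Fintype.card n : ℂ) • ((colProd H a)ᴴ * colProd H c * diagonal (x c)) := by
          rw [Matrix.smul_mul, h c, Matrix.mul_smul, Matrix.mul_assoc]
  · intro hx
    let a := Classical.arbitrary n
    refine ⟨(Fintype.card n : ℂ)⁻¹ • (colProd H a * diagonal (x a) * (colProd H a)ᴴ),
      fun c => ?_⟩
    rw [Matrix.smul_mul, Matrix.mul_assoc, Matrix.mul_assoc, hx a c, Matrix.mul_assoc,
      hH.colProd_mul_conjTranspose_colProd_mul, smul_smul, inv_mul_cancel₀ hQ, one_smul]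

theorem exists_colProdEigen_iff_conjTranspose [Nonempty n] {H x : Matrix n n ℂ}
    (hH : H.IsComplexHadamard) : (∃ Y, ColProdEigen H Y x) ↔ ∃ f, ColProdEigen Hᴴ x f := by
  refine ⟨fun ⟨Y, h⟩ => ⟨_, h.dual hH⟩, fun ⟨f, h⟩ => ⟨(Fintype.card n : ℂ)⁻¹ • f, ?_⟩⟩
  have := (h.dual hH.conjTranspose).smul (Fintype.card n : ℂ)⁻¹
  rwa [conjTranspose_conjTranspose, smul_smul,
    inv_mul_cancel₀ (Nat.cast_ne_zero.2 Fintype.card_ne_zero), one_smul] at this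

end Matrix

section AngleOperator

open Matrix

variable {n : Type*} [Fintype n] [DecidableEq n]

lemma angleOp_apply (H x : Matrix n n ℂ) (a b : n) :
    angleOp H x a b = ((Fintype.card n : ℂ) ^ 3)⁻¹ *
      ∑ c, ∑ d, ((‖((colProd H a)ᴴ * colProd H c) b d‖ ^ 2 : ℝ) : ℂ) * x c d := by
  simp only [conjTranspose_colProd_mul_apply, angleOp, LinearMap.coe_mk, AddHom.coe_mk, of_apply,
    starRingEnd_apply]

lemma angleOp_eq_self_iff_sum_mul_eq {H x : Matrix n n ℂ} :
    angleOp H x = x ↔ ∀ a b, ∑ c, ∑ d,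
      ((‖((colProd H a)ᴴ * colProd H c) b d‖ ^ 2 : ℝ) : ℂ) * x c d =
        (Fintype.card n : ℂ) ^ 3 * x a b := by
  rw [← Matrix.ext_iff]
  refine forall₂_congr fun a b => ?_
  have : Nonempty n := ⟨a⟩
  rw [angleOp_apply,
    inv_mul_eq_iff_eq_mul₀ (pow_ne_zero 3 (Nat.cast_ne_zero.2 Fintype.card_ne_zero))]

theorem angleOp_eq_self_iff {H : Matrix n n ℂ} (hH : H.IsComplexHadamard) {x : Matrix n n ℂ} :
    angleOp H x = x ↔ ∀ a c, diagonal (x a) * ((colProd H a)ᴴ * colProd H c) =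
      (colProd H a)ᴴ * colProd H c * diagonal (x c) := by
  rw [angleOp_eq_self_iff_sum_mul_eq]
  simp only [← Matrix.ext_iff, diagonal_mul, mul_diagonal]
  constructor
  · intro hx a c b d
    by_cases hG : ((colProd H a)ᴴ * colProd H c) b d = 0
    · simp [hG]
    have key := apply_eq_apply_of_sum_mul_eq (x := fun p : n × n => x p.1 p.2)
      (N := fun p q => ‖((colProd H p.1)ᴴ * colProd H q.1) p.2 q.2‖ ^ 2)
      (r := Fintype.card n ^ 3) (fun _ _ => by positivity) (fun p q => ?_) (fun p => ?_)
      (fun p => ?_) (i := (a, b)) (j := (c, d)) (by simpa using hG)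
    · rw [key, mul_comm]
    · rw [← norm_star, ← conjTranspose_apply, conjTranspose_mul, conjTranspose_conjTranspose]
    · rw [Fintype.sum_prod_type]
      exact hH.sum_sum_norm_sq_conjTranspose_colProd_mul_apply p.1 p.2
    · rw [Fintype.sum_prod_type]
      exact_mod_cast hx p.1 p.2
  · intro h a b
    calc ∑ c, ∑ d, ((‖((colProd H a)ᴴ * colProd H c) b d‖ ^ 2 : ℝ) : ℂ) * x c d
        = ∑ c, ∑ d, ((‖((colProd H a)ᴴ * colProd H c) b d‖ ^ 2 : ℝ) : ℂ) * x a b := by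
          refine sum_congr rfl fun c _ => sum_congr rfl fun d _ => ?_
          rw [Complex.ofReal_pow, ← Complex.conj_mul', mul_assoc, mul_assoc, ← h,
            mul_comm (x a b)]
      _ = (((∑ c, ∑ d, ‖((colProd H a)ᴴ * colProd H c) b d‖ ^ 2 : ℝ)) : ℂ) * x a b := by
          push_cast
          simp only [sum_mul]
      _ = (Fintype.card n : ℂ) ^ 3 * x a b := by
          rw [hH.sum_sum_norm_sq_conjTranspose_colProd_mul_apply]
          push_cast
          rfl

theorem angleOp_eq_self_iff_exists_colProdEigen [Nonempty n] {H x : Matrix n n ℂ}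
    (hH : H.IsComplexHadamard) : angleOp H x = x ↔ ∃ f, ColProdEigen Hᴴ x f := by
  rw [angleOp_eq_self_iff hH, ← exists_colProdEigen_iff hH,
    exists_colProdEigen_iff_conjTranspose hH]

end AngleOperator

open Matrix

/-- For every complex Hadamard matrix `H` of size `Q ≥ 1`, the fixed-point set
`{x : Θ_H x = x}` of the angle operator is a commutative unital *-subalgebra of `M_Q(ℂ)`:
it contains the identity, is closed under addition, scalar multiplication, matrix
multiplication and conjugate transpose, and any two of its elements commute. -/
theorem angleOp_fixedPoints_commutative_star_subalgebra
    (Q : ℕ) (hQ : 1 ≤ Q) (H : Matrix (Fin Q) (Fin Q) ℂ)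
    (h_unimodular : ∀ i j, ‖H i j‖ = 1)
    (h_hadamard : H * Hᴴ = (Q : ℂ) • (1 : Matrix (Fin Q) (Fin Q) ℂ)) :
    angleOp H (1 : Matrix (Fin Q) (Fin Q) ℂ) = 1 ∧
    (∀ x y : Matrix (Fin Q) (Fin Q) ℂ,
      angleOp H x = x → angleOp H y = y → angleOp H (x + y) = x + y) ∧
    (∀ (c : ℂ) (x : Matrix (Fin Q) (Fin Q) ℂ),
      angleOp H x = x → angleOp H (c • x) = c • x) ∧
    (∀ x y : Matrix (Fin Q) (Fin Q) ℂ,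
      angleOp H x = x → angleOp H y = y → angleOp H (x * y) = x * y) ∧
    (∀ x : Matrix (Fin Q) (Fin Q) ℂ, angleOp H x = x → angleOp H xᴴ = xᴴ) ∧
    (∀ x y : Matrix (Fin Q) (Fin Q) ℂ,
      angleOp H x = x → angleOp H y = y → x * y = y * x) := by
  have hH : H.IsComplexHadamard := ⟨h_unimodular, by rwa [Fintype.card_fin]⟩
  have : Nonempty (Fin Q) := ⟨⟨0, hQ⟩⟩
  have h_fix (x : Matrix (Fin Q) (Fin Q) ℂ) :=
    angleOp_eq_self_iff_exists_colProdEigen hH (x := x)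
  refine ⟨(h_fix 1).2 ⟨_, colProdEigen_one Hᴴ⟩, fun x y hx hy => by rw [map_add, hx, hy],
    fun c x hx => by rw [map_smul, hx], fun x y hx hy => ?_, fun x hx => ?_, fun x y hx hy => ?_⟩
  · obtain ⟨f, hf⟩ := (h_fix x).1 hx
    obtain ⟨g, hg⟩ := (h_fix y).1 hy
    exact (h_fix _).2 ⟨_, hf.mul hg⟩
  · obtain ⟨f, hf⟩ := (h_fix x).1 hx
    exact (h_fix _).2 ⟨_, hf.conjTranspose hH.conjTranspose⟩
  · obtain ⟨f, hf⟩ := (h_fix x).1 hx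
    obtain ⟨g, hg⟩ := (h_fix y).1 hy
    exact (hf.mul hg).unique hH.conjTranspose (hadamard_comm f g ▸ hg.mul hf)
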